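/- arXiv:1411.5543 — 7 statements merged into one kernel-verified Lean document; each statement's English description precedes it below -/
import Mathlib

section
/- Assume in addition that ψ is strictly convex on (m₋, m₊), that m₀ ∈ (m₋, m₊) (i.e. the infimum m₀ is an interior point) and that ψ'(m₀) = 0, so that ψ(m₀) < 0. Then the line y = −x·ψ(m₀) + m₀ is an asymptote of I at +∞: I(x) + x·ψ(m₀) − m₀ → 0 as x → ∞. -/
/-- If moreover `ψ` is strictly convex on `(m₋, m₊)`, `m₀` is an interior
point of `(m₋, m₊)` and `ψ'(m₀) = 0`, then the line `y = -x ψ(m₀) + m₀` is an asymptote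
of the rate function `I` at `+∞`: `I(x) + x ψ(m₀) - m₀ → 0` as `x → ∞`. -/
theorem rate_function_asymptote
    (mneg mpos : ℝ) (ψ ψ' : ℝ → ℝ)
    (hneg : mneg < 0) (hpos : 0 < mpos)
    (hconv : ConvexOn ℝ (Set.Ioo mneg mpos) ψ)
    (hstrict : StrictConvexOn ℝ (Set.Ioo mneg mpos) ψ)
    (hderiv : ∀ m ∈ Set.Ioo mneg mpos, HasDerivAt ψ (ψ' m) m)
    (hψ0 : ψ 0 = 0) (hψ'0 : 0 < ψ' 0)
    (m₀ : ℝ) (hm₀ : m₀ = sInf {θ : ℝ | θ ∈ Set.Ioo mneg mpos ∧ 0 < ψ' θ})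
    (hm₀mem : m₀ ∈ Set.Ioo mneg mpos) (hψ'm₀ : ψ' m₀ = 0)
    (I : ℝ → ℝ)
    (hI : ∀ x : ℝ, I x = sSup {y : ℝ | ∃ m ∈ Set.Ioo m₀ mpos, y = m - x * ψ m}) :
    Filter.Tendsto (fun x : ℝ => I x + x * ψ m₀ - m₀) Filter.atTop (nhds 0) := by
  have hm₀pos : m₀ < mpos := hm₀mem.2
  -- ψ is strictly above ψ m₀ on (m₀, mpos)
  have hgt : ∀ m ∈ Set.Ioo m₀ mpos, ψ m₀ < ψ m := by
    intro m hm
    have hmem : m ∈ Set.Ioo mneg mpos := ⟨lt_trans hm₀mem.1 hm.1, hm.2⟩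
    have h := hstrict.lt_slope_of_hasDerivAt hm₀mem hmem hm.1 (hderiv m₀ hm₀mem)
    rw [hψ'm₀] at h
    have hmm : 0 < m - m₀ := by linarith [hm.1]
    rw [slope_def_field] at h
    have h2 : 0 < ψ m - ψ m₀ := by
      have := (div_pos_iff_of_pos_right hmm).mp h
      linarith
    linarith
  rw [Metric.tendsto_nhds]
  intro ε hε
  rw [Filter.eventually_atTop]
  -- choose δ, m₁, c
  set δ : ℝ := min (ε / 2) ((mpos - m₀) / 2) with hδdef
  have hδpos : 0 < δ := lt_min (by linarith) (by linarith)
  have hδε : δ ≤ ε / 2 := min_le_left _ _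
  set m₁ : ℝ := m₀ + δ with hm₁def
  have hm₁mem : m₁ ∈ Set.Ioo m₀ mpos := by
    constructor
    · simp [hm₁def]; linarith
    · have : δ ≤ (mpos - m₀) / 2 := min_le_right _ _
      simp only [hm₁def]; linarith
  have hm₁memB : m₁ ∈ Set.Ioo mneg mpos := ⟨lt_trans hm₀mem.1 hm₁mem.1, hm₁mem.2⟩
  set c : ℝ := ψ m₁ - ψ m₀ with hcdef
  have hcpos : 0 < c := by
    have := hgt m₁ hm₁mem
    simp only [hcdef]; linarith
  refine ⟨max 0 ((mpos - m₀) / c), fun x hx => ?_⟩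
  have hx0 : 0 ≤ x := le_trans (le_max_left _ _) hx
  have hxc : mpos - m₀ ≤ x * c := by
    have h1 : (mpos - m₀) / c ≤ x := le_trans (le_max_right _ _) hx
    calc mpos - m₀ = ((mpos - m₀) / c) * c := by field_simp
    _ ≤ x * c := by apply mul_le_mul_of_nonneg_right h1 hcpos.le
  -- upper bound for all elements of the sup set
  have hub : ∀ y ∈ {y : ℝ | ∃ m ∈ Set.Ioo m₀ mpos, y = m - x * ψ m},
      y ≤ m₀ - x * ψ m₀ + ε / 2 := by
    rintro y ⟨m, hm, rfl⟩
    have hmem : m ∈ Set.Ioo mneg mpos := ⟨lt_trans hm₀mem.1 hm.1, hm.2⟩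
    have hgtm := hgt m hm
    have hxψ : 0 ≤ x * (ψ m - ψ m₀) := mul_nonneg hx0 (by linarith)
    rcases le_or_gt m m₁ with hle | hlt
    · -- m close to m₀ : m - m₀ ≤ δ ≤ ε/2
      have : m - m₀ ≤ δ := by simp only [hm₁def] at hle; linarith
      nlinarith
    · -- m far from m₀ : use secant monotonicity
      have hsec := hconv.secant_mono hm₀mem hm₁memB hmem
        (ne_of_gt hm₁mem.1) (ne_of_gt hm.1) hlt.le
      have hm₁m₀ : m₁ - m₀ = δ := by simp [hm₁def]
      rw [hm₁m₀] at hsec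
      have hmm : 0 < m - m₀ := by linarith [hm.1]
      have hkey : c ≤ ψ m - ψ m₀ := by
        have h1 : c / δ ≤ (ψ m - ψ m₀) / (m - m₀) := hsec
        have h2 : c * (m - m₀) ≤ (ψ m - ψ m₀) * δ :=
          (div_le_div_iff₀ hδpos hmm).mp h1
        have hδm : δ ≤ m - m₀ := by simp only [hm₁def] at hlt; linarith
        nlinarith
      have : mpos - m₀ ≤ x * (ψ m - ψ m₀) := by
        calc mpos - m₀ ≤ x * c := hxc
        _ ≤ x * (ψ m - ψ m₀) := mul_le_mul_of_nonneg_left hkey hx0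
      have hmlt : m < mpos := hm.2
      nlinarith
  have hbdd : BddAbove {y : ℝ | ∃ m ∈ Set.Ioo m₀ mpos, y = m - x * ψ m} :=
    ⟨m₀ - x * ψ m₀ + ε / 2, hub⟩
  have hne : {y : ℝ | ∃ m ∈ Set.Ioo m₀ mpos, y = m - x * ψ m}.Nonempty :=
    ⟨m₁ - x * ψ m₁, m₁, hm₁mem, rfl⟩
  -- lower bound via limit as m → m₀⁺
  have hcont : ContinuousAt ψ m₀ := (hderiv m₀ hm₀mem).continuousAt
  have htend : Filter.Tendsto (fun m => m - x * ψ m) (nhdsWithin m₀ (Set.Ioi m₀))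
      (nhds (m₀ - x * ψ m₀)) := by
    have : ContinuousAt (fun m => m - x * ψ m) m₀ :=
      continuousAt_id.sub (continuousAt_const.mul hcont)
    exact this.continuousWithinAt.tendsto
  have hlb : m₀ - x * ψ m₀ ≤ sSup {y : ℝ | ∃ m ∈ Set.Ioo m₀ mpos, y = m - x * ψ m} := by
    refine le_of_tendsto htend ?_
    filter_upwards [Ioo_mem_nhdsGT_of_mem (Set.mem_Ico.mpr ⟨le_refl m₀, hm₀pos⟩)] with m hm
    exact le_csSup hbdd ⟨m, hm, rfl⟩
  have hub' := csSup_le hne hub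
  rw [hI x, Real.dist_eq, sub_zero]
  rw [abs_of_nonneg (by linarith)]
  linarith
end

section
/- Let β > 0, γ > 0 and d ≥ 0, and let x > 0 satisfy d·x < 1 (and also allow d·x = 1 when d > 0, where the value is βx). Then sup{ m − x·m·(d + β/(γ − m)) : m < γ } = (√(γ(1 − dx)) − √(βx))². -/
/-! Substituting `s = γ - m > 0`, the objective becomes `γ a + β x - (a s + b / s)` with
`a = 1 - d x ≥ 0` and `b = γ β x > 0`, so the supremum is `γ a + β x` minus the infimum of
`a s + b / s` over `s > 0`. By AM-GM that infimum is `2 √(a b)`: attained at `s = √b / √a` when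
`a > 0`, and approached as `s → ∞` when `a = 0`. Expanding the square,
`γ a + β x - 2 √(a b) = (√(γ a) - √(β x))²`. -/

open Set

theorem IsGLB.isLUB_image_const_sub {α : Type*} [AddGroup α] [Preorder α] [AddLeftMono α]
    [AddRightMono α] {s : Set α} {a : α} (h : IsGLB s a) (c : α) :
    IsLUB ((c - ·) '' s) (c - a) :=
  (OrderIso.subLeft c).isGLB_image'.2 h

namespace Real

theorem two_sqrt_mul_le_mul_add_div {a b s : ℝ} (ha : 0 ≤ a) (hb : 0 ≤ b) (hs : 0 < s) :
    2 * √(a * b) ≤ a * s + b / s := by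
  have key : a * s + b / s - 2 * √(a * b) = (√a * s - √b) ^ 2 / s := by
    rw [sqrt_mul ha]
    field_simp
    linear_combination (-s ^ 2) * sq_sqrt ha - sq_sqrt hb
  have : 0 ≤ (√a * s - √b) ^ 2 / s := by positivity
  linarith

theorem isGLB_mul_add_div {a b : ℝ} (ha : 0 ≤ a) (hb : 0 < b) :
    IsGLB ((fun s => a * s + b / s) '' Ioi 0) (2 * √(a * b)) := by
  have lower : 2 * √(a * b) ∈ lowerBounds ((fun s => a * s + b / s) '' Ioi 0) := by
    rintro _ ⟨s, hs, rfl⟩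
    exact two_sqrt_mul_le_mul_add_div ha hb.le hs
  rcases ha.eq_or_lt with rfl | ha
  · refine ⟨lower, fun L hL => ?_⟩
    by_contra! hL0
    rw [zero_mul, sqrt_zero, mul_zero] at hL0
    have hL_le := hL ⟨2 * b / L, mem_Ioi.2 (by positivity), rfl⟩
    field_simp at hL_le
    nlinarith
  · have hsa : 0 < √a := sqrt_pos.2 ha
    have hsb : 0 < √b := sqrt_pos.2 hb
    refine IsLeast.isGLB ⟨⟨√b / √a, div_pos hsb hsa, ?_⟩, lower⟩
    rw [sqrt_mul ha.le]
    field_simp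
    rw [sq_sqrt ha.le, sq_sqrt hb.le]
    ring

end Real

theorem poisson_drift_objective_range_eq (β γ d x : ℝ) :
    {y : ℝ | ∃ m ∈ Iio γ, y = m - x * (m * (d + β / (γ - m)))} =
      (γ * (1 - d * x) + β * x - ·) '' ((fun s => (1 - d * x) * s + γ * β * x / s) '' Ioi 0) := by
  ext y
  constructor
  · rintro ⟨m, hm, rfl⟩
    have hs : 0 < γ - m := sub_pos.2 hm
    refine ⟨_, ⟨γ - m, hs, rfl⟩, ?_⟩
    have hs : γ - m ≠ 0 := hs.ne'
    field_simp
    ring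
  · rintro ⟨_, ⟨s, hs, rfl⟩, rfl⟩
    refine ⟨γ - s, sub_lt_self γ hs, ?_⟩
    have hs : s ≠ 0 := hs.ne'
    rw [sub_sub_cancel]
    field_simp
    ring

theorem poisson_drift_clock_rate_function_general
    (β γ d x : ℝ) (hβ : 0 < β) (hγ : 0 < γ) (hx : 0 < x)
    (hdx : d * x ≤ 1) :
    sSup {y : ℝ | ∃ m ∈ Set.Iio γ, y = m - x * (m * (d + β / (γ - m)))}
      = (Real.sqrt (γ * (1 - d * x)) - Real.sqrt (β * x)) ^ 2 := by
  have hA : 0 ≤ 1 - d * x := by linarith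
  have hB : 0 < γ * β * x := by positivity
  have hvalue : γ * (1 - d * x) + β * x - 2 * √((1 - d * x) * (γ * β * x)) =
      (√(γ * (1 - d * x)) - √(β * x)) ^ 2 := by
    have hγA : 0 ≤ γ * (1 - d * x) := by positivity
    rw [sub_sq, Real.sq_sqrt hγA, Real.sq_sqrt (by positivity), mul_assoc 2, ← Real.sqrt_mul hγA]
    ring_nf
  rw [poisson_drift_objective_range_eq, ← hvalue]
  exact ((Real.isGLB_mul_add_div hA hB).isLUB_image_const_sub _).csSup_eq
    ((nonempty_Ioi.image _).image _)

/-- For `β > 0`, `γ > 0`, `d ≥ 0`, `x > 0` with `d·x ≤ 1` (the case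
`d·x = 1` being possible only when `d > 0`), the rate function of the clock of the
pssMp associated with `ξ_t = d·t + Pois(β,γ)_t` is
`sup {m - x·m·(d + β/(γ-m)) : m < γ} = (√(γ(1-dx)) - √(βx))²`. -/
theorem poisson_drift_clock_rate_function
    (β γ d x : ℝ) (hβ : 0 < β) (hγ : 0 < γ) (hd : 0 ≤ d) (hx : 0 < x)
    (hdx : d * x ≤ 1) :
    sSup {y : ℝ | ∃ m ∈ Set.Iio γ, y = m - x * (m * (d + β / (γ - m)))}
      = (Real.sqrt (γ * (1 - d * x)) - Real.sqrt (β * x)) ^ 2 :=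
  poisson_drift_clock_rate_function_general β γ d x hβ hγ hx hdx
end

section
/- Let 0 < β < γ and x > 1. Then sup{ m − x·m·(γ − β + m)/(γ + m) : m > −γ + √(βγ) } = (√(γ(x − 1)) − √(βx))². -/
private lemma sawtooth_helper (β γ x a b : ℝ) (hβ : 0 < β) (hβγ : β < γ) (hx : 1 < x)
    (ha : 0 < a) (hb : 0 < b) (ha2 : a ^ 2 = γ * (x - 1)) (hb2 : b ^ 2 = β * x) :
    sSup {y : ℝ | ∃ m ∈ Set.Ioi (-γ + Real.sqrt (β * γ)),
        y = m - x * (m * (γ - β + m) / (γ + m))} = (a - b) ^ 2 := by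
  have hγ : 0 < γ := hβ.trans hβγ
  have hx1 : (0:ℝ) < x - 1 := by linarith
  have hab2 : (a * b) ^ 2 = β * γ * x * (x - 1) := by
    rw [mul_pow, ha2, hb2]; ring
  apply IsGreatest.csSup_eq
  constructor
  · -- membership: take m = a*b/(x-1) - γ
    refine ⟨a * b / (x - 1) - γ, ?_, ?_⟩
    · simp only [Set.mem_Ioi]
      have h1 : Real.sqrt (β * γ) < a * b / (x - 1) := by
        rw [Real.sqrt_lt' (by positivity)]
        rw [div_pow, hab2]
        rw [lt_div_iff₀ (by positivity)]
        nlinarith [mul_pos hβ hγ]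
      linarith
    · have hγm : γ + (a * b / (x - 1) - γ) = a * b / (x - 1) := by ring
      rw [hγm]
      have hγ' : γ = a ^ 2 / (x - 1) := by rw [ha2]; field_simp
      have hβ' : β = b ^ 2 / x := by rw [hb2]; field_simp
      rw [hγ', hβ']
      have hx0 : x ≠ 0 := by positivity
      field_simp
      ring
  · -- upper bound
    rintro y ⟨m, hm, rfl⟩
    simp only [Set.mem_Ioi] at hm
    have hu : 0 < γ + m := by
      have := Real.sqrt_nonneg (β * γ); linarith
    have hrw : m - x * (m * (γ - β + m) / (γ + m))
        = (m * (γ + m) - x * (m * (γ - β + m))) / (γ + m) := by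
      field_simp
    rw [hrw, div_le_iff₀ hu]
    nlinarith [sq_nonneg ((x - 1) * (γ + m) - a * b), hab2, mul_pos hx1 hu,
      mul_pos (mul_pos hx1 hu) hu]

/-- For `0 < β < γ` and `x > 1`, the rate function of the clock of the
saw-tooth process `ξ_t = t - Pois(β,γ)_t` is
`sup {m - x·m·(γ-β+m)/(γ+m) : m > -γ + √(βγ)} = (√(γ(x-1)) - √(βx))²`. -/
theorem sawtooth_clock_rate_function
    (β γ x : ℝ) (hβ : 0 < β) (hβγ : β < γ) (hx : 1 < x) :
    sSup {y : ℝ | ∃ m ∈ Set.Ioi (-γ + Real.sqrt (β * γ)),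
        y = m - x * (m * (γ - β + m) / (γ + m))}
      = (Real.sqrt (γ * (x - 1)) - Real.sqrt (β * x)) ^ 2 := by
  have hγ : 0 < γ := hβ.trans hβγ
  exact sawtooth_helper β γ x _ _ hβ hβγ hx
    (Real.sqrt_pos.2 (by nlinarith)) (Real.sqrt_pos.2 (by nlinarith))
    (Real.sq_sqrt (by nlinarith)) (Real.sq_sqrt (by nlinarith))
end

section
/- For every α ∈ (1, 2) there exists a unique γ ∈ (−1, 0) such that Ψ(γ + α) = Ψ(γ), where Ψ = Γ'/Γ is the digamma function (equivalently, Γ'(γ+α)·Γ(γ) = Γ'(γ)·Γ(γ+α), with Γ the real Gamma function, which is nonzero on (−1,0) and on (α−1, α)). -/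
/-!
The equation says that `γ` is a critical point of `g(γ) = log Γ(γ + α) - log |Γ(γ)|` on `(-1, 0)`.
Since `log |Γ(γ)| = log Γ(γ + 1) - log |γ|`, `g` is the strictly concave `log |γ|` plus
`log Γ(γ + α) - log Γ(γ + 1)`, which is concave for `α ≥ 1` as the pointwise limit of the Gauss
product approximations `(α - 1) log n + ∑_{m ≤ n} (log (γ + 1 + m) - log (γ + α + m))`.
At both ends of the interval `|Γ(γ)| → ∞` while `Γ(γ + α)` stays finite (this needs `α > 1`),
so `g → -∞`, and a strictly concave function with this behaviour has exactly one critical point.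
-/

open Set Filter Real Topology

theorem ConcaveOn.finset_sum {E ι : Type*} [AddCommMonoid E] [Module ℝ E] {s : Set E}
    {f : ι → E → ℝ} (t : Finset ι) (hs : Convex ℝ s) (hf : ∀ i ∈ t, ConcaveOn ℝ s (f i)) :
    ConcaveOn ℝ s (fun x => ∑ i ∈ t, f i x) := by
  classical
  induction t using Finset.induction_on with
  | empty => simpa using concaveOn_const (0 : ℝ) hs
  | insert i t hi ih =>
    simp only [Finset.sum_insert hi]
    exact (hf i (t.mem_insert_self i)).add (ih fun j hj => hf j (Finset.mem_insert_of_mem hj))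

theorem ConcaveOn.of_tendsto {E ι : Type*} [AddCommMonoid E] [Module ℝ E] {s : Set E}
    {l : Filter ι} [l.NeBot] {f : ι → E → ℝ} {g : E → ℝ} (hs : Convex ℝ s)
    (hf : ∀ᶠ i in l, ConcaveOn ℝ s (f i))
    (hlim : ∀ x ∈ s, Tendsto (fun i => f i x) l (𝓝 (g x))) : ConcaveOn ℝ s g :=
  ⟨hs, fun x hx y hy a b ha hb hab =>
    le_of_tendsto_of_tendsto (((hlim x hx).const_smul a).add ((hlim y hy).const_smul b))
      (hlim _ (hs hx hy ha hb hab)) (hf.mono fun _ hi => hi.2 hx hy ha hb hab)⟩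

theorem concaveOn_log_add_sub_log_add {a b : ℝ} (hba : b ≤ a) :
    ConcaveOn ℝ (Ioi (-b)) (fun x => log (x + b) - log (x + a)) := by
  have hderiv : ∀ x ∈ Ioi (-b), HasDerivAt (fun x => log (x + b) - log (x + a))
      ((a - b) / ((x + b) * (x + a))) x := fun x (hx : -b < x) => by
    have hxb : x + b ≠ 0 := by linarith
    have hxa : x + a ≠ 0 := by linarith
    refine ((((hasDerivAt_id x).add_const b).log hxb).fun_sub
      (((hasDerivAt_id x).add_const a).log hxa)).congr_deriv ?_
    simp only [id]
    field_simp
    ring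
  refine AntitoneOn.concaveOn_of_deriv (convex_Ioi _)
    (fun x hx => (hderiv x hx).continuousAt.continuousWithinAt) ?_ ?_ <;> rw [interior_Ioi]
  · exact fun x hx => (hderiv x hx).differentiableAt.differentiableWithinAt
  · intro x (hx : -b < x) y (hy : -b < y) hxy
    rw [(hderiv x hx).deriv, (hderiv y hy).deriv]
    have : 0 < x + b := by linarith
    have : 0 < x + a := by linarith
    gcongr
    linarith

theorem concaveOn_log_Gamma_add_sub_log_Gamma_add {a b : ℝ} (hba : b ≤ a) :
    ConcaveOn ℝ (Ioi (-b)) (fun x => log (Gamma (x + a)) - log (Gamma (x + b))) := by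
  refine ConcaveOn.of_tendsto (l := atTop)
    (f := fun n x => BohrMollerup.logGammaSeq (x + a) n - BohrMollerup.logGammaSeq (x + b) n)
    (convex_Ioi _) (Eventually.of_forall fun n => ?_) fun x (hx : -b < x) =>
      (BohrMollerup.tendsto_log_gamma (by linarith)).sub
        (BohrMollerup.tendsto_log_gamma (by linarith))
  have hseq : (fun x => BohrMollerup.logGammaSeq (x + a) n - BohrMollerup.logGammaSeq (x + b) n)
      = fun x => (a - b) * log n +
        ∑ m ∈ Finset.range (n + 1), (log (x + (b + m)) - log (x + (a + m))) := by
    funext x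
    simp only [BohrMollerup.logGammaSeq, Finset.sum_sub_distrib, add_assoc]
    ring
  rw [hseq]
  refine (concaveOn_const _ (convex_Ioi _)).add
    (ConcaveOn.finset_sum _ (convex_Ioi _) fun m _ => ?_)
  refine (concaveOn_log_add_sub_log_add (by linarith)).subset
    (Ioi_subset_Ioi ?_) (convex_Ioi _)
  linarith [(m.cast_nonneg : (0:ℝ) ≤ m)]

theorem ne_neg_natCast_of_pos {x : ℝ} (hx : 0 < x) (m : ℕ) : x ≠ -m := by
  linarith [(m.cast_nonneg : (0:ℝ) ≤ m)]

theorem ne_neg_natCast_of_mem_Ioo {x : ℝ} (hx : x ∈ Ioo (-1) 0) (m : ℕ) : x ≠ -m := by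
  rintro rfl
  rcases m with _ | m
  · simp at hx
  · push_cast at hx
    linarith [hx.1, (m.cast_nonneg : (0:ℝ) ≤ m)]

theorem hasDerivAt_log_Gamma {x : ℝ} (hx : ∀ m : ℕ, x ≠ -m) :
    HasDerivAt (fun x => log (Gamma x)) (deriv Gamma x / Gamma x) x :=
  (differentiableAt_Gamma hx).hasDerivAt.log (Gamma_ne_zero hx)

theorem continuousAt_log_Gamma_add {x c : ℝ} (h : 0 < x + c) :
    ContinuousAt (fun y => log (Gamma (y + c))) x :=
  (hasDerivAt_log_Gamma (ne_neg_natCast_of_pos h)).continuousAt.comp (f := (· + c))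
    (continuous_add_const c).continuousAt

theorem log_Gamma_eq_log_Gamma_add_one_sub_log {x : ℝ} (hx : ∀ m : ℕ, x ≠ -m) :
    log (Gamma x) = log (Gamma (x + 1)) - log x := by
  have hx0 : x ≠ 0 := by simpa using hx 0
  rw [Gamma_add_one hx0, log_mul hx0 (Gamma_ne_zero hx)]
  ring

theorem tendsto_Gamma_nhdsGT_zero : Tendsto Gamma (𝓝[>] 0) atTop := by
  have h1 : Tendsto (fun x => Gamma (x + 1)) (𝓝[>] 0) (𝓝 1) := by
    have hcont : ContinuousAt (fun x => Gamma (x + 1)) 0 :=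
      (differentiableAt_Gamma (ne_neg_natCast_of_pos (x := 0 + 1) (by norm_num))).continuousAt.comp
        (f := (· + 1)) (continuous_add_const 1).continuousAt
    simpa using hcont.tendsto.mono_left nhdsWithin_le_nhds
  refine (h1.pos_mul_atTop one_pos tendsto_inv_nhdsGT_zero).congr' ?_
  filter_upwards [self_mem_nhdsWithin] with x (hx : 0 < x)
  rw [Gamma_add_one hx.ne']
  field_simp

/-- Since `Real.log` is `log |·|`, this is `log (Γ(γ + α) / |Γ(γ)|)` also where `Γ(γ) < 0`. -/
noncomputable def logGammaRatio (α γ : ℝ) : ℝ := log (Gamma (γ + α)) - log (Gamma γ)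

theorem logGammaRatio_eq {α γ : ℝ} (hγ : ∀ m : ℕ, γ ≠ -m) :
    logGammaRatio α γ = log (Gamma (γ + α)) - log (Gamma (γ + 1)) + log γ := by
  rw [logGammaRatio, log_Gamma_eq_log_Gamma_add_one_sub_log hγ]
  ring

theorem hasDerivAt_logGammaRatio {α γ : ℝ} (hγ : ∀ m : ℕ, γ ≠ -m) (hγα : ∀ m : ℕ, γ + α ≠ -m) :
    HasDerivAt (logGammaRatio α)
      (deriv Gamma (γ + α) / Gamma (γ + α) - deriv Gamma γ / Gamma γ) γ := by
  have hshift : HasDerivAt (fun γ => log (Gamma (γ + α)))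
      (deriv Gamma (γ + α) / Gamma (γ + α)) γ := by
    simpa using (hasDerivAt_log_Gamma hγα).comp_add_const γ α
  exact hshift.fun_sub (hasDerivAt_log_Gamma hγ)

theorem strictConcaveOn_logGammaRatio {α : ℝ} (hα : 1 ≤ α) :
    StrictConcaveOn ℝ (Ioo (-1) 0) (logGammaRatio α) := by
  refine ((concaveOn_log_Gamma_add_sub_log_Gamma_add hα).subset Ioo_subset_Ioi_self
    (convex_Ioo _ _)).add_strictConcaveOn
      (strictConcaveOn_log_Iio.subset Ioo_subset_Iio_self (convex_Ioo _ _)) |>.congr ?_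
  exact fun γ hγ => (logGammaRatio_eq (ne_neg_natCast_of_mem_Ioo hγ)).symm

theorem tendsto_logGammaRatio_nhdsLT_zero {α : ℝ} (hα : 0 < α) :
    Tendsto (logGammaRatio α) (𝓝[<] 0) atBot := by
  have hcont : ContinuousAt (fun γ => log (Gamma (γ + α)) - log (Gamma (γ + 1))) 0 :=
    (continuousAt_log_Gamma_add (by simpa using hα)).sub (continuousAt_log_Gamma_add (by norm_num))
  refine ((hcont.tendsto.mono_left nhdsWithin_le_nhds).add_atBot tendsto_log_nhdsLT_zero).congr' ?_
  filter_upwards [Ioo_mem_nhdsLT (show (-1:ℝ) < 0 by norm_num)] with γ hγ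
  exact (logGammaRatio_eq (ne_neg_natCast_of_mem_Ioo hγ)).symm

theorem tendsto_logGammaRatio_nhdsGT_neg_one {α : ℝ} (hα : 1 < α) :
    Tendsto (logGammaRatio α) (𝓝[>] (-1)) atBot := by
  have hcont : ContinuousAt (fun γ => log (Gamma (γ + α)) + log γ) (-1) :=
    (continuousAt_log_Gamma_add (by linarith)).add (continuousAt_log (by norm_num))
  have hpole : Tendsto (fun γ => log (Gamma (γ + 1))) (𝓝[>] (-1)) atTop := by
    refine tendsto_log_atTop.comp (tendsto_Gamma_nhdsGT_zero.comp ?_)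
    refine tendsto_nhdsWithin_of_tendsto_nhds_of_eventually_within _ ?_ ?_
    · simpa using ((continuous_add_const (1:ℝ)).tendsto (-1)).mono_left nhdsWithin_le_nhds
    · filter_upwards [self_mem_nhdsWithin] with γ (hγ : -1 < γ)
      exact neg_lt_iff_pos_add.mp hγ
  refine ((hcont.tendsto.mono_left nhdsWithin_le_nhds).add_atBot
    (tendsto_neg_atTop_atBot.comp hpole)).congr' ?_
  filter_upwards [Ioo_mem_nhdsGT (show (-1:ℝ) < 0 by norm_num)] with γ hγ
  rw [logGammaRatio_eq (ne_neg_natCast_of_mem_Ioo hγ)]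
  simp only [Function.comp_apply]
  ring

theorem existsUnique_hasDerivAt_eq_zero_of_strictConcaveOn {f f' : ℝ → ℝ} {a b : ℝ} (hab : a < b)
    (hf : StrictConcaveOn ℝ (Ioo a b) f) (hf' : ∀ x ∈ Ioo a b, HasDerivAt f (f' x) x)
    (ha : Tendsto f (𝓝[>] a) atBot) (hb : Tendsto f (𝓝[<] b) atBot) :
    ∃! x, x ∈ Ioo a b ∧ f' x = 0 := by
  -- Rolle's theorem for `exp ∘ f`, which tends to `0` at both ends.
  obtain ⟨c, hc, hexp⟩ := exists_hasDerivAt_eq_zero' hab (tendsto_exp_atBot.comp ha)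
    (tendsto_exp_atBot.comp hb) fun x hx => (hf' x hx).exp
  refine ⟨c, ⟨hc, (mul_eq_zero.1 hexp).resolve_left (exp_ne_zero _)⟩, ?_⟩
  rintro x ⟨hx, hx0⟩
  have hanti := hf.strictAntiOn_deriv fun x hx => (hf' x hx).differentiableAt
  refine hanti.injOn hx hc ?_
  rw [(hf' x hx).deriv, (hf' c hc).deriv, hx0, (mul_eq_zero.1 hexp).resolve_left (exp_ne_zero _)]

/-- For every `α ∈ (1,2)` there exists a unique `γ ∈ (-1,0)` with
`Ψ(γ+α) = Ψ(γ)`, where `Ψ = Γ'/Γ` is the digamma function; equivalently (clearing the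
nonzero denominators `Γ(γ)` and `Γ(γ+α)`), `Γ'(γ+α)·Γ(γ) = Γ'(γ)·Γ(γ+α)`. -/
theorem digamma_equation_unique_solution
    (α : ℝ) (hα : α ∈ Set.Ioo (1:ℝ) 2) :
    ∃! γ : ℝ, γ ∈ Set.Ioo (-1 : ℝ) 0 ∧
      deriv Real.Gamma (γ + α) * Real.Gamma γ
        = deriv Real.Gamma γ * Real.Gamma (γ + α) := by
  have hγ : ∀ γ ∈ Ioo (-1 : ℝ) 0, ∀ m : ℕ, γ ≠ -m := fun γ hγ =>
    ne_neg_natCast_of_mem_Ioo hγ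
  have hγα : ∀ γ ∈ Ioo (-1 : ℝ) 0, ∀ m : ℕ, γ + α ≠ -m := fun γ hγ =>
    ne_neg_natCast_of_pos (by linarith [hγ.1, hα.1])
  have hcrit : ∀ γ ∈ Ioo (-1 : ℝ) 0, deriv Gamma (γ + α) * Gamma γ = deriv Gamma γ * Gamma (γ + α)
      ↔ deriv Gamma (γ + α) / Gamma (γ + α) - deriv Gamma γ / Gamma γ = 0 := fun γ h => by
    rw [sub_eq_zero, div_eq_div_iff (Gamma_ne_zero (hγα γ h)) (Gamma_ne_zero (hγ γ h))]
  refine (existsUnique_congr fun γ => and_congr_right (hcrit γ)).mpr ?_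
  exact existsUnique_hasDerivAt_eq_zero_of_strictConcaveOn (by norm_num)
    (strictConcaveOn_logGammaRatio hα.1.le) (fun γ h => hasDerivAt_logGammaRatio (hγ γ h) (hγα γ h))
    (tendsto_logGammaRatio_nhdsGT_neg_one hα.1)
    (tendsto_logGammaRatio_nhdsLT_zero (zero_lt_one.trans hα.1))
end

section
/- Let 0 < α < d and set ψ(m) = −2^α · (Γ((α − m)/2)/Γ(−m/2)) · (Γ((m + d)/2)/Γ((m + d − α)/2)) (Γ the real Gamma function). Then ψ(m)/m → 2^{α−1}·Γ(α/2)·Γ(d/2)/Γ((d − α)/2) as m → 0 with m ≠ 0; in particular this limit is strictly positive. (Hence ψ'(0) = 2^{α−1}Γ(α/2)Γ(d/2)/Γ((d−α)/2) > 0.) -/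
lemma gammaContAt {s : ℝ} (hs : 0 < s) : ContinuousAt Real.Gamma s := by
  refine (Real.differentiableAt_Gamma fun m => ?_).continuousAt
  intro h
  have h1 : (0:ℝ) < -(m:ℝ) := h ▸ hs
  have h2 : (0:ℝ) ≤ (m:ℝ) := Nat.cast_nonneg m
  linarith

/-- For `0 < α < d`, the Laplace exponent
`ψ(m) = -2^α·(Γ((α-m)/2)/Γ(-m/2))·(Γ((m+d)/2)/Γ((m+d-α)/2))` of the
hypergeometric-stable Lévy process satisfies
`ψ(m)/m → 2^{α-1}·Γ(α/2)·Γ(d/2)/Γ((d-α)/2) > 0` as `m → 0`, `m ≠ 0`. -/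
theorem hypergeometric_stable_exponent_deriv_at_zero
    (α d : ℝ) (hα : 0 < α) (hαd : α < d) :
    Filter.Tendsto
      (fun m : ℝ => -(2:ℝ) ^ α * (Real.Gamma ((α - m) / 2) / Real.Gamma (-m / 2)) *
          (Real.Gamma ((m + d) / 2) / Real.Gamma ((m + d - α) / 2)) / m)
      (nhdsWithin 0 {(0:ℝ)}ᶜ)
      (nhds ((2:ℝ) ^ (α - 1) * Real.Gamma (α / 2) * Real.Gamma (d / 2)
          / Real.Gamma ((d - α) / 2))) ∧
    0 < (2:ℝ) ^ (α - 1) * Real.Gamma (α / 2) * Real.Gamma (d / 2)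
        / Real.Gamma ((d - α) / 2) := by
  have hd : 0 < d := lt_trans hα hαd
  have hdα : 0 < d - α := by linarith
  constructor
  · set g : ℝ → ℝ := fun m =>
      (2:ℝ) ^ (α - 1) * (Real.Gamma ((α - m) / 2) / Real.Gamma (1 - m / 2)) *
        (Real.Gamma ((m + d) / 2) / Real.Gamma ((m + d - α) / 2)) with hg
    have c1 : ContinuousAt (fun m : ℝ => Real.Gamma ((α - m) / 2)) 0 := by
      have h : ContinuousAt Real.Gamma ((α - (0:ℝ)) / 2) := by
        rw [show ((α - (0:ℝ)) / 2) = α / 2 by ring]; exact gammaContAt (by positivity)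
      exact h.comp (f := fun m : ℝ => (α - m) / 2) (by fun_prop)
    have c2 : ContinuousAt (fun m : ℝ => Real.Gamma (1 - m / 2)) 0 := by
      have h : ContinuousAt Real.Gamma (1 - (0:ℝ) / 2) := by
        rw [show (1 - (0:ℝ) / 2) = 1 by ring]; exact gammaContAt one_pos
      exact h.comp (f := fun m : ℝ => 1 - m / 2) (by fun_prop)
    have c3 : ContinuousAt (fun m : ℝ => Real.Gamma ((m + d) / 2)) 0 := by
      have h : ContinuousAt Real.Gamma (((0:ℝ) + d) / 2) := by
        rw [show (((0:ℝ) + d) / 2) = d / 2 by ring]; exact gammaContAt (by positivity)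
      exact h.comp (f := fun m : ℝ => (m + d) / 2) (by fun_prop)
    have c4 : ContinuousAt (fun m : ℝ => Real.Gamma ((m + d - α) / 2)) 0 := by
      have h : ContinuousAt Real.Gamma (((0:ℝ) + d - α) / 2) := by
        rw [show (((0:ℝ) + d - α) / 2) = (d - α) / 2 by ring]; exact gammaContAt (by positivity)
      exact h.comp (f := fun m : ℝ => (m + d - α) / 2) (by fun_prop)
    have n2 : Real.Gamma (1 - (0:ℝ) / 2) ≠ 0 := by
      rw [show (1 - (0:ℝ) / 2) = 1 by ring]
      exact (Real.Gamma_pos_of_pos one_pos).ne'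
    have n4 : Real.Gamma (((0:ℝ) + d - α) / 2) ≠ 0 := by
      rw [show (((0:ℝ) + d - α) / 2) = (d - α) / 2 by ring]
      exact (Real.Gamma_pos_of_pos (by positivity)).ne'
    have hcont : ContinuousAt g 0 :=
      ((continuousAt_const.mul (c1.div c2 n2)).mul (c3.div c4 n4))
    have hg0 : g 0 = (2:ℝ) ^ (α - 1) * Real.Gamma (α / 2) * Real.Gamma (d / 2)
        / Real.Gamma ((d - α) / 2) := by
      simp only [hg]
      rw [show ((α - (0:ℝ)) / 2) = α / 2 by ring, show (1 - (0:ℝ) / 2) = 1 by ring,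
        show (((0:ℝ) + d) / 2) = d / 2 by ring, show (((0:ℝ) + d - α) / 2) = (d - α) / 2 by ring,
        Real.Gamma_one]
      ring
    have htend : Filter.Tendsto g (nhdsWithin 0 {(0:ℝ)}ᶜ)
        (nhds ((2:ℝ) ^ (α - 1) * Real.Gamma (α / 2) * Real.Gamma (d / 2)
          / Real.Gamma ((d - α) / 2))) := by
      rw [← hg0]
      exact hcont.continuousWithinAt.tendsto
    refine htend.congr' ?_
    filter_upwards [self_mem_nhdsWithin,
      nhdsWithin_le_nhds (Metric.ball_mem_nhds (0:ℝ) one_pos)] with m hm hm1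
    have hm0 : m ≠ 0 := hm
    have hmlt : |m| < 1 := by simpa [Real.dist_eq] using hm1
    have hmlt' : m < 1 := lt_of_le_of_lt (le_abs_self m) hmlt
    have key : Real.Gamma (1 - m / 2) = (-m / 2) * Real.Gamma (-m / 2) := by
      have h := Real.Gamma_add_one (s := -m/2)
        (div_ne_zero (neg_ne_zero.mpr hm0) two_ne_zero)
      rw [show (1 - m / 2) = -m / 2 + 1 by ring, h]
    have hΓ1 : Real.Gamma (1 - m / 2) ≠ 0 :=
      (Real.Gamma_pos_of_pos (by linarith)).ne'
    have hΓ : Real.Gamma (-m / 2) ≠ 0 := by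
      intro h; rw [key, h, mul_zero] at hΓ1; exact hΓ1 rfl
    have h2 : (2:ℝ) ^ α = 2 * (2:ℝ) ^ (α - 1) := by
      rw [← Real.rpow_one_add' (by norm_num) (by intro h; linarith)]
      ring_nf
    simp only [hg]
    rw [show (1 - m / 2) = -m / 2 + 1 by ring] at *
    rw [key]
    field_simp
    rw [h2]
    ring
  · have := Real.Gamma_pos_of_pos (by positivity : (0:ℝ) < α/2)
    have := Real.Gamma_pos_of_pos (by positivity : (0:ℝ) < d/2)
    have := Real.Gamma_pos_of_pos (by positivity : (0:ℝ) < (d-α)/2)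
    positivity
end

section
/- Let 0 < α < d and set ψ(m) = −2^α · (Γ((α − m)/2)/Γ(−m/2)) · (Γ((m + d)/2)/Γ((m + d − α)/2)) (Γ the real Gamma function). Then ψ is differentiable at m₀ := (α − d)/2 with ψ'(m₀) = 0, and ψ(m₀) = −2^α·(Γ((d + α)/4)/Γ((d − α)/4))². -/
/-- For `0 < α < d`, the Laplace exponent
`ψ(m) = -2^α·(Γ((α-m)/2)/Γ(-m/2))·(Γ((m+d)/2)/Γ((m+d-α)/2))` of the
hypergeometric-stable Lévy process is differentiable at `m₀ := (α-d)/2` with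
`ψ'(m₀) = 0`, and `ψ(m₀) = -2^α·(Γ((d+α)/4)/Γ((d-α)/4))²`. -/
theorem hypergeometric_stable_exponent_minimum
    (α d : ℝ) (hα : 0 < α) (hαd : α < d) :
    HasDerivAt
      (fun m : ℝ => -(2:ℝ) ^ α * (Real.Gamma ((α - m) / 2) / Real.Gamma (-m / 2)) *
        (Real.Gamma ((m + d) / 2) / Real.Gamma ((m + d - α) / 2)))
      0 ((α - d) / 2) ∧
    -(2:ℝ) ^ α * (Real.Gamma ((α - (α - d) / 2) / 2) / Real.Gamma (-((α - d) / 2) / 2)) *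
        (Real.Gamma (((α - d) / 2 + d) / 2) / Real.Gamma (((α - d) / 2 + d - α) / 2))
      = -(2:ℝ) ^ α * (Real.Gamma ((d + α) / 4) / Real.Gamma ((d - α) / 4)) ^ 2 := by
  set ψ : ℝ → ℝ := fun m : ℝ =>
    -(2:ℝ) ^ α * (Real.Gamma ((α - m) / 2) / Real.Gamma (-m / 2)) *
      (Real.Gamma ((m + d) / 2) / Real.Gamma ((m + d - α) / 2)) with hψdef
  set m₀ : ℝ := (α - d) / 2 with hm₀
  have ha : (0:ℝ) < (d + α) / 4 := by linarith
  have hb : (0:ℝ) < (d - α) / 4 := by linarith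
  have hgdiff : ∀ x : ℝ, 0 < x → DifferentiableAt ℝ Real.Gamma x := by
    intro x hx
    refine Real.differentiableAt_Gamma fun n => ?_
    have : -(n : ℝ) ≤ 0 := neg_nonpos.mpr n.cast_nonneg
    exact (this.trans_lt hx).ne'
  have e1 : (α - m₀) / 2 = (d + α) / 4 := by rw [hm₀]; ring
  have e2 : -m₀ / 2 = (d - α) / 4 := by rw [hm₀]; ring
  have e3 : (m₀ + d) / 2 = (d + α) / 4 := by rw [hm₀]; ring
  have e4 : (m₀ + d - α) / 2 = (d - α) / 4 := by rw [hm₀]; ring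
  -- value equality
  have hval : ψ m₀ = -(2:ℝ) ^ α *
      (Real.Gamma ((d + α) / 4) / Real.Gamma ((d - α) / 4)) ^ 2 := by
    rw [hψdef]; simp only [e1, e2, e3, e4]; ring
  refine ⟨?_, hval⟩
  -- differentiability
  have hne2 : Real.Gamma (-m₀ / 2) ≠ 0 := by
    rw [e2]; exact (Real.Gamma_pos_of_pos hb).ne'
  have hne4 : Real.Gamma ((m₀ + d - α) / 2) ≠ 0 := by
    rw [e4]; exact (Real.Gamma_pos_of_pos hb).ne'
  have d1 : DifferentiableAt ℝ (fun m : ℝ => Real.Gamma ((α - m) / 2)) m₀ := by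
    exact (hgdiff _ (e1 ▸ ha)).comp m₀ (by fun_prop)
  have d2 : DifferentiableAt ℝ (fun m : ℝ => Real.Gamma (-m / 2)) m₀ := by
    exact (hgdiff _ (e2 ▸ hb)).comp m₀ (by fun_prop)
  have d3 : DifferentiableAt ℝ (fun m : ℝ => Real.Gamma ((m + d) / 2)) m₀ := by
    exact (hgdiff _ (e3 ▸ ha)).comp m₀ (by fun_prop)
  have d4 : DifferentiableAt ℝ (fun m : ℝ => Real.Gamma ((m + d - α) / 2)) m₀ := by
    exact (hgdiff _ (e4 ▸ hb)).comp m₀ (by fun_prop)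
  have hψdiff : DifferentiableAt ℝ ψ m₀ :=
    (((differentiableAt_const _).mul (d1.div d2 hne2)).mul (d3.div d4 hne4))
  have hL : HasDerivAt ψ (deriv ψ m₀) m₀ := hψdiff.hasDerivAt
  -- symmetry ψ (α - d - m) = ψ m
  have hsym : ∀ m : ℝ, ψ (α - d - m) = ψ m := by
    intro m
    rw [hψdef]
    simp only []
    have r1 : (α - (α - d - m)) / 2 = (m + d) / 2 := by ring
    have r2 : -(α - d - m) / 2 = (m + d - α) / 2 := by ring
    have r3 : (α - d - m + d) / 2 = (α - m) / 2 := by ring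
    have r4 : (α - d - m + d - α) / 2 = -m / 2 := by ring
    rw [r1, r2, r3, r4]; ring
  have hσ : HasDerivAt (fun m : ℝ => α - d - m) (-1) m₀ :=
    ((hasDerivAt_id m₀).const_sub (α - d))
  have hfix : α - d - m₀ = m₀ := by rw [hm₀]; ring
  have hcomp : HasDerivAt (ψ ∘ fun m : ℝ => α - d - m) (deriv ψ m₀ * -1) m₀ := by
    refine HasDerivAt.comp m₀ ?_ hσ
    rw [hfix]; exact hL
  have hcomp' : HasDerivAt ψ (deriv ψ m₀ * -1) m₀ := by
    have : (ψ ∘ fun m : ℝ => α - d - m) = ψ := by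
      funext m; simp [Function.comp, hsym m]
    rwa [this] at hcomp
  have : deriv ψ m₀ = 0 := by
    have := hL.unique hcomp'
    linarith
  rw [← this]; exact hL
end

section
/- For every m ∈ (−3, 1) with m ∉ {−2, −1, 0}, one has −2 · (Γ((1 − m)/2)/Γ(−m/2)) · (Γ((m + 3)/2)/Γ((m + 2)/2)) = (m + 1)·tan(πm/2), where Γ is the real Gamma function. (This is the Laplace exponent ψ of the Lévy process associated with the modulus of a 3-dimensional Cauchy process; by continuity ψ(−1) = −2/π.) -/
/-- For `m ∈ (-3,1)`, `m ∉ {-2,-1,0}`, the Laplace exponent of the Lévy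
process associated with the modulus of a 3-dimensional Cauchy process simplifies:
`-2·(Γ((1-m)/2)/Γ(-m/2))·(Γ((m+3)/2)/Γ((m+2)/2)) = (m+1)·tan(πm/2)`. -/
theorem cauchy_clock_exponent_closed_form
    (m : ℝ) (hm : m ∈ Set.Ioo (-3 : ℝ) 1)
    (h2 : m ≠ -2) (h1 : m ≠ -1) (h0 : m ≠ 0) :
    -2 * (Real.Gamma ((1 - m) / 2) / Real.Gamma (-m / 2)) *
        (Real.Gamma ((m + 3) / 2) / Real.Gamma ((m + 2) / 2))
      = (m + 1) * Real.tan (Real.pi * m / 2) := by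
  obtain ⟨hml, hmu⟩ := hm
  set s := Real.sin (Real.pi * m / 2) with hs
  set c := Real.cos (Real.pi * m / 2) with hc
  -- cos ≠ 0 : π*m/2 ≠ π/2 + k*π
  have hc0 : c ≠ 0 := by
    rw [hc, Real.cos_ne_zero_iff]
    intro k
    intro h
    have : m = 2 * k + 1 := by
      have hπ := Real.pi_ne_zero
      field_simp at h
      nlinarith [Real.pi_pos]
    rcases lt_trichotomy (k : ℝ) (-1) with hk | hk | hk
    · have hkZ : k < -1 := by exact_mod_cast hk
      have : (k : ℝ) ≤ -2 := by exact_mod_cast (by omega : k ≤ -2)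
      linarith
    · exact h1 (by rw [this, hk]; ring)
    · have hkZ : (-1 : ℤ) < k := by exact_mod_cast hk
      have : (0 : ℝ) ≤ (k : ℝ) := by exact_mod_cast (by omega : (0:ℤ) ≤ k)
      linarith
  have hs0 : s ≠ 0 := by
    rw [hs]
    intro h
    rw [Real.sin_eq_zero_iff] at h
    obtain ⟨k, hk⟩ := h
    have : m = 2 * k := by
      have hπ := Real.pi_ne_zero
      field_simp at hk
      nlinarith [Real.pi_pos]
    rcases lt_trichotomy (k : ℝ) (-1) with hk' | hk' | hk'
    · have hkZ : k < -1 := by exact_mod_cast hk'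
      have : (k : ℝ) ≤ -2 := by exact_mod_cast (by omega : k ≤ -2)
      linarith
    · exact h2 (by rw [this, hk']; ring)
    · have hkZ : (-1 : ℤ) < k := by exact_mod_cast hk'
      rcases lt_or_eq_of_le (by omega : (0:ℤ) ≤ k) with h' | h'
      · have : (1 : ℝ) ≤ (k : ℝ) := by exact_mod_cast (by omega : (1:ℤ) ≤ k)
        linarith
      · exact h0 (by rw [this, ← h']; norm_num)
  -- reflection at x = (m+1)/2
  have hA : Real.Gamma ((m + 1) / 2) * Real.Gamma ((1 - m) / 2) = Real.pi / c := by
    have := Real.Gamma_mul_Gamma_one_sub ((m + 1) / 2)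
    have h1' : (1 : ℝ) - (m + 1) / 2 = (1 - m) / 2 := by ring
    have h2' : Real.sin (Real.pi * ((m + 1) / 2)) = c := by
      rw [hc]
      have : Real.pi * ((m + 1) / 2) = Real.pi * m / 2 + Real.pi / 2 := by ring
      rw [this, Real.sin_add_pi_div_two]
    rw [h1', h2'] at this
    exact this
  -- reflection at x = -m/2
  have hB : Real.Gamma (-m / 2) * Real.Gamma ((m + 2) / 2) = -(Real.pi / s) := by
    have := Real.Gamma_mul_Gamma_one_sub (-m / 2)
    have h1' : (1 : ℝ) - (-m / 2) = (m + 2) / 2 := by ring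
    have h2' : Real.sin (Real.pi * (-m / 2)) = -s := by
      rw [hs]
      have : Real.pi * (-m / 2) = -(Real.pi * m / 2) := by ring
      rw [this, Real.sin_neg]
    rw [h1', h2'] at this
    rw [this, div_neg]
  -- recursion: Γ((m+3)/2) = ((m+1)/2) Γ((m+1)/2)
  have hR : Real.Gamma ((m + 3) / 2) = (m + 1) / 2 * Real.Gamma ((m + 1) / 2) := by
    have h1' : (m + 3) / 2 = (m + 1) / 2 + 1 := by ring
    rw [h1', Real.Gamma_add_one]
    intro h
    apply h1
    have : m + 1 = 0 := by linarith [(div_eq_zero_iff.mp h).resolve_right (by norm_num)]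
    linarith
  have hπ := Real.pi_ne_zero
  have hG2 : Real.Gamma (-m / 2) ≠ 0 := by
    intro h
    rw [h, zero_mul] at hB
    exact hπ (by field_simp at hB; linarith)
  have hG4 : Real.Gamma ((m + 2) / 2) ≠ 0 := by
    intro h
    rw [h, mul_zero] at hB
    exact hπ (by field_simp at hB; linarith)
  rw [Real.tan_eq_sin_div_cos, hR, ← hs, ← hc]
  have key : -2 * (Real.Gamma ((1 - m) / 2) / Real.Gamma (-m / 2)) *
      ((m + 1) / 2 * Real.Gamma ((m + 1) / 2) / Real.Gamma ((m + 2) / 2))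
      = -(m + 1) * ((Real.Gamma ((m + 1) / 2) * Real.Gamma ((1 - m) / 2)) /
        (Real.Gamma (-m / 2) * Real.Gamma ((m + 2) / 2))) := by ring
  rw [key, hA, hB]
  field_simp
end
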